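/- Let g be a Lie algebra over a field k of characteristic zero and let r ∈ U(g)⊗U(g) lie in the image of g⊗g with τ(r) = −r. Suppose there exists f₂ ∈ U(g)⊗U(g) such that (1⊗r)·(id⊗Δ)(r) − (r⊗1)·(Δ⊗id)(r) = 1⊗f₂ − (Δ⊗id)(f₂) + (id⊗Δ)(f₂) − f₂⊗1 (that is, the degree-2 part of the 2-cocycle equation for a twist 1 + r·h + f₂·h² + ... holds). Then r satisfies the classical Yang–Baxter equation in U(g)⊗U(g)⊗U(g): [r₂₃, r₁₃] + [r₂₃, r₁₂] + [r₁₃, r₁₂] = 0. -/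

import Mathlib

open TensorProduct

noncomputable section

variable (k : Type*) [Field k] [CharZero k]
variable (g : Type*) [LieRing g] [LieAlgebra k g]

/-- The canonical linear map `g → U(g)`. -/
def ιU : g →ₗ[k] UniversalEnvelopingAlgebra k g :=
  letI : LieRing (UniversalEnvelopingAlgebra k g) := LieRing.ofAssociativeRing
  (UniversalEnvelopingAlgebra.ι k).toLinearMap

/-- The canonical map `g ⊗ g → U(g) ⊗ U(g)`; its range is "the image of `g ⊗ g`". -/
def ιι : g ⊗[k] g →ₗ[k]
    UniversalEnvelopingAlgebra k g ⊗[k] UniversalEnvelopingAlgebra k g :=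
  TensorProduct.map (ιU k g) (ιU k g)

/-- The flip automorphism of `U(g) ⊗ U(g)`. -/
def τU : UniversalEnvelopingAlgebra k g ⊗[k] UniversalEnvelopingAlgebra k g ≃ₐ[k]
    UniversalEnvelopingAlgebra k g ⊗[k] UniversalEnvelopingAlgebra k g :=
  Algebra.TensorProduct.comm k _ _

/-- The associator for `U(g)`. -/
def αU : (UniversalEnvelopingAlgebra k g ⊗[k] UniversalEnvelopingAlgebra k g) ⊗[k]
      UniversalEnvelopingAlgebra k g ≃ₐ[k]
    UniversalEnvelopingAlgebra k g ⊗[k]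
      (UniversalEnvelopingAlgebra k g ⊗[k] UniversalEnvelopingAlgebra k g) :=
  Algebra.TensorProduct.assoc k k k _ _ _

/-- The alternation `Alt₂(X) = ½(X − τ(X))`. -/
def alt2 (X : UniversalEnvelopingAlgebra k g ⊗[k] UniversalEnvelopingAlgebra k g) :
    UniversalEnvelopingAlgebra k g ⊗[k] UniversalEnvelopingAlgebra k g :=
  (2 : k)⁻¹ • (X - τU k g X)

variable {g} in
/-- `X` is an additive 2-cocycle: `1⊗X + (id⊗Δ)(X) = X⊗1 + (Δ⊗id)(X)`. -/
def IsAdd2Cocycle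
    (Δ : UniversalEnvelopingAlgebra k g →ₐ[k]
      UniversalEnvelopingAlgebra k g ⊗[k] UniversalEnvelopingAlgebra k g)
    (X : UniversalEnvelopingAlgebra k g ⊗[k] UniversalEnvelopingAlgebra k g) : Prop :=
  (1 : UniversalEnvelopingAlgebra k g) ⊗ₜ[k] X +
      Algebra.TensorProduct.map (AlgHom.id k (UniversalEnvelopingAlgebra k g)) Δ X =
    αU k g (X ⊗ₜ[k] (1 : UniversalEnvelopingAlgebra k g) +
      Algebra.TensorProduct.map Δ (AlgHom.id k (UniversalEnvelopingAlgebra k g)) X)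

/-- `r₁₂ = r ⊗ 1` in `U(g)^{⊗3}`. -/
def u12 (r : UniversalEnvelopingAlgebra k g ⊗[k] UniversalEnvelopingAlgebra k g) :
    UniversalEnvelopingAlgebra k g ⊗[k]
      (UniversalEnvelopingAlgebra k g ⊗[k] UniversalEnvelopingAlgebra k g) :=
  αU k g (r ⊗ₜ[k] (1 : UniversalEnvelopingAlgebra k g))

/-- `r₂₃ = 1 ⊗ r` in `U(g)^{⊗3}`. -/
def u23 (r : UniversalEnvelopingAlgebra k g ⊗[k] UniversalEnvelopingAlgebra k g) :
    UniversalEnvelopingAlgebra k g ⊗[k]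
      (UniversalEnvelopingAlgebra k g ⊗[k] UniversalEnvelopingAlgebra k g) :=
  (1 : UniversalEnvelopingAlgebra k g) ⊗ₜ[k] r

/-- `r₁₃ = (id ⊗ τ)(r ⊗ 1)` in `U(g)^{⊗3}`. -/
def u13 (r : UniversalEnvelopingAlgebra k g ⊗[k] UniversalEnvelopingAlgebra k g) :
    UniversalEnvelopingAlgebra k g ⊗[k]
      (UniversalEnvelopingAlgebra k g ⊗[k] UniversalEnvelopingAlgebra k g) :=
  Algebra.TensorProduct.map (AlgHom.id k (UniversalEnvelopingAlgebra k g)) (τU k g).toAlgHom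
    (αU k g (r ⊗ₜ[k] (1 : UniversalEnvelopingAlgebra k g)))

local notation "Ug" => UniversalEnvelopingAlgebra k g

/-!
Apply the total antisymmetrisation `alt3 = ∑_{σ ∈ S₃} sgn σ · σ` of `U(g)^{⊗3}` to the
degree-two equation. Elements of `g` are primitive, so `Δ` is cocommutative: `(id ⊗ Δ) f₂`
is fixed by the transposition `(23)`, `(Δ ⊗ id) f₂` by `(12)`, and `f₂ ⊗ 1`, `1 ⊗ f₂` differ
by a 3-cycle, so the right-hand side is killed. Primitivity also gives
`(id ⊗ Δ) r = r₁₂ + r₁₃` and `(Δ ⊗ id) r = r₁₃ + r₂₃`, so the left-hand side is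
`r₂₃ (r₁₂ + r₁₃) - r₁₂ (r₁₃ + r₂₃)`. As `τ r = -r`, the transpositions permute
`r₁₂, r₁₃, r₂₃` up to sign, and the antisymmetrisation of the left-hand side is four times
the Yang–Baxter expression, which therefore vanishes in characteristic zero.
-/

/- Stated in an arbitrary ring: on `A ⊗ (A ⊗ A)` the negation coming from `map_neg` is not
reducibly the ring negation, and `noncomm_ring` fails there. -/
lemma alternating_sum_eq_four_smul_yangBaxter {B F : Type*} [Ring B] [FunLike F B B]
    [RingHomClass F B B] (s t : F) {a b c : B} (hsa : s a = -a) (hsb : s b = c) (hsc : s c = b)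
    (hta : t a = b) (htb : t b = a) (htc : t c = -c) :
    let X := c * (a + b) - a * (b + c)
    X - s X - t X + s (t X) + t (s X) - t (s (t X)) =
      4 • ((c * b - b * c) + (c * a - a * c) + (b * a - a * b)) := by
  simp only [map_sub, map_add, map_mul, map_neg, hsa, hsb, hsc, hta, htb, htc]
  noncomm_ring

section TensorCube

variable {R A : Type*} [CommRing R] [Ring A] [Algebra R A]

def swap23 : A ⊗[R] (A ⊗[R] A) →ₐ[R] A ⊗[R] (A ⊗[R] A) :=
  Algebra.TensorProduct.map (AlgHom.id R A) (Algebra.TensorProduct.comm R A A).toAlgHom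

def swap12 : A ⊗[R] (A ⊗[R] A) →ₐ[R] A ⊗[R] (A ⊗[R] A) :=
  (Algebra.TensorProduct.assoc R R R A A A).toAlgHom.comp <|
    (Algebra.TensorProduct.map (Algebra.TensorProduct.comm R A A).toAlgHom (AlgHom.id R A)).comp
      (Algebra.TensorProduct.assoc R R R A A A).symm.toAlgHom

@[simp]
lemma swap23_tmul (x y z : A) : swap23 (x ⊗ₜ[R] (y ⊗ₜ[R] z)) = x ⊗ₜ (z ⊗ₜ y) := by
  simp [swap23]

@[simp]
lemma swap12_tmul (x y z : A) : swap12 (x ⊗ₜ[R] (y ⊗ₜ[R] z)) = y ⊗ₜ (x ⊗ₜ z) := by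
  simp [swap12]

lemma swap23_swap23 (X : A ⊗[R] (A ⊗[R] A)) : swap23 (swap23 X) = X := by
  suffices h : swap23.comp swap23 = AlgHom.id R (A ⊗[R] (A ⊗[R] A)) from DFunLike.congr_fun h X
  ext <;> simp [Algebra.TensorProduct.one_def]

lemma swap12_swap12 (X : A ⊗[R] (A ⊗[R] A)) : swap12 (swap12 X) = X := by
  suffices h : swap12.comp swap12 = AlgHom.id R (A ⊗[R] (A ⊗[R] A)) from DFunLike.congr_fun h X
  ext <;> simp [Algebra.TensorProduct.one_def]

lemma swap12_swap23_swap12 (X : A ⊗[R] (A ⊗[R] A)) :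
    swap12 (swap23 (swap12 X)) = swap23 (swap12 (swap23 X)) := by
  suffices h : swap12.comp (swap23.comp swap12) = swap23.comp (swap12.comp swap23) from
    DFunLike.congr_fun h X
  ext <;> simp [Algebra.TensorProduct.one_def]

/-- `leg12 r`, `leg13 r`, `leg23 r` are `r₁₂`, `r₁₃`, `r₂₃`; on `U(g)` they agree
definitionally with `u12`, `u13`, `u23`. -/
def leg12 : A ⊗[R] A →ₐ[R] A ⊗[R] (A ⊗[R] A) :=
  (Algebra.TensorProduct.assoc R R R A A A).toAlgHom.comp Algebra.TensorProduct.includeLeft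

def leg23 : A ⊗[R] A →ₐ[R] A ⊗[R] (A ⊗[R] A) :=
  Algebra.TensorProduct.includeRight

def leg13 : A ⊗[R] A →ₐ[R] A ⊗[R] (A ⊗[R] A) :=
  swap23.comp leg12

@[simp]
lemma leg12_tmul (x y : A) : leg12 (x ⊗ₜ[R] y) = x ⊗ₜ (y ⊗ₜ (1 : A)) := by
  simp [leg12]

@[simp]
lemma leg13_tmul (x y : A) : leg13 (x ⊗ₜ[R] y) = x ⊗ₜ ((1 : A) ⊗ₜ y) := by
  simp [leg13]

@[simp]
lemma leg23_apply (r : A ⊗[R] A) : leg23 r = (1 : A) ⊗ₜ r := rfl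

lemma swap23_leg12 (r : A ⊗[R] A) : swap23 (leg12 r) = leg13 r := rfl

lemma swap23_leg13 (r : A ⊗[R] A) : swap23 (leg13 r) = leg12 r :=
  swap23_swap23 (leg12 r)

lemma swap23_leg23 (r : A ⊗[R] A) :
    swap23 (leg23 r) = leg23 (Algebra.TensorProduct.comm R A A r) := by
  simp [swap23]

lemma swap12_leg12 (r : A ⊗[R] A) :
    swap12 (leg12 r) = leg12 (Algebra.TensorProduct.comm R A A r) := by
  simp [swap12, leg12]

lemma swap12_leg23 (r : A ⊗[R] A) : swap12 (leg23 r) = leg13 r := by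
  suffices h : swap12.comp leg23 = (leg13 : A ⊗[R] A →ₐ[R] _) from DFunLike.congr_fun h r
  ext <;> simp

lemma swap12_leg13 (r : A ⊗[R] A) : swap12 (leg13 r) = leg23 r := by
  rw [← swap12_leg23, swap12_swap12]

def alt3 : Module.End R (A ⊗[R] (A ⊗[R] A)) :=
  let s : Module.End R (A ⊗[R] (A ⊗[R] A)) := swap12.toLinearMap
  let t : Module.End R (A ⊗[R] (A ⊗[R] A)) := swap23.toLinearMap
  1 - s - t + s * t + t * s - t * s * t

lemma alt3_apply (X : A ⊗[R] (A ⊗[R] A)) :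
    alt3 X = X - swap12 X - swap23 X + swap12 (swap23 X) + swap23 (swap12 X)
      - swap23 (swap12 (swap23 X)) := rfl

lemma alt3_swap23 (X : A ⊗[R] (A ⊗[R] A)) : alt3 (swap23 X) = -alt3 X := by
  simp only [alt3_apply, swap23_swap23]; abel

lemma alt3_swap12 (X : A ⊗[R] (A ⊗[R] A)) : alt3 (swap12 X) = -alt3 X := by
  have h : swap23 (swap12 (swap23 (swap12 X))) = swap12 (swap23 X) := by
    rw [← swap12_swap23_swap12, swap12_swap12]
  rw [alt3_apply, alt3_apply, swap12_swap12, h, swap12_swap23_swap12]; abel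

lemma alt3_eq_zero_of_swap23_eq {X : A ⊗[R] (A ⊗[R] A)} (h : swap23 X = X) : alt3 X = 0 := by
  simp only [alt3_apply, h]; abel

lemma alt3_eq_zero_of_swap12_eq {X : A ⊗[R] (A ⊗[R] A)} (h : swap12 X = X) : alt3 X = 0 := by
  have h' : swap23 (swap12 (swap23 X)) = swap12 (swap23 X) := by
    rw [← swap12_swap23_swap12, h]
  simp only [alt3_apply, h, h']; abel

lemma alt3_legs_eq_four_smul_yangBaxter {r : A ⊗[R] A}
    (hr : Algebra.TensorProduct.comm R A A r = -r) :
    alt3 (leg23 r * (leg12 r + leg13 r) - leg12 r * (leg13 r + leg23 r)) =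
      4 • ((leg23 r * leg13 r - leg13 r * leg23 r) + (leg23 r * leg12 r - leg12 r * leg23 r) +
        (leg13 r * leg12 r - leg12 r * leg13 r)) := by
  have h12 : swap12 (leg12 r) = -leg12 r := by rw [swap12_leg12, hr, map_neg]
  have h23 : swap23 (leg23 r) = -leg23 r := by rw [swap23_leg23, hr, map_neg]
  exact alternating_sum_eq_four_smul_yangBaxter swap12 swap23 h12 (swap12_leg13 r)
    (swap12_leg23 r) (swap23_leg12 r) (swap23_leg13 r) h23

variable {Δ : A →ₐ[R] A ⊗[R] A}

lemma swap23_map_id_comul (hcomm : (Algebra.TensorProduct.comm R A A).toAlgHom.comp Δ = Δ)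
    (f : A ⊗[R] A) :
    swap23 (Algebra.TensorProduct.map (AlgHom.id R A) Δ f) =
      Algebra.TensorProduct.map (AlgHom.id R A) Δ f := by
  rw [swap23, ← AlgHom.comp_apply, ← Algebra.TensorProduct.map_id_comp, hcomm]

lemma swap12_assoc (Y : (A ⊗[R] A) ⊗[R] A) :
    swap12 (Algebra.TensorProduct.assoc R R R A A A Y) =
      Algebra.TensorProduct.assoc R R R A A A
        (Algebra.TensorProduct.map (Algebra.TensorProduct.comm R A A).toAlgHom (AlgHom.id R A)
          Y) := by
  simp [swap12]

lemma swap12_assoc_map_comul_id (hcomm : (Algebra.TensorProduct.comm R A A).toAlgHom.comp Δ = Δ)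
    (f : A ⊗[R] A) :
    swap12 (Algebra.TensorProduct.assoc R R R A A A
        (Algebra.TensorProduct.map Δ (AlgHom.id R A) f)) =
      Algebra.TensorProduct.assoc R R R A A A (Algebra.TensorProduct.map Δ (AlgHom.id R A) f) := by
  rw [swap12_assoc, ← AlgHom.comp_apply, ← Algebra.TensorProduct.map_comp _ Δ (AlgHom.id R A),
    hcomm, AlgHom.id_comp]

lemma alt3_coboundary (hcomm : (Algebra.TensorProduct.comm R A A).toAlgHom.comp Δ = Δ)
    (f : A ⊗[R] A) :
    alt3 (leg23 f - Algebra.TensorProduct.assoc R R R A A A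
        (Algebra.TensorProduct.map Δ (AlgHom.id R A) f) +
      Algebra.TensorProduct.map (AlgHom.id R A) Δ f - leg12 f) = 0 := by
  have hleg : leg12 f = swap23 (swap12 (leg23 f)) := by rw [swap12_leg23, swap23_leg13]
  rw [map_sub, map_add, map_sub, alt3_eq_zero_of_swap12_eq (swap12_assoc_map_comul_id hcomm f),
    alt3_eq_zero_of_swap23_eq (swap23_map_id_comul hcomm f), hleg, alt3_swap23, alt3_swap12,
    neg_neg]
  abel

lemma map_id_comul_of_mem_range {M N : Type*} [AddCommMonoid M] [Module R M] [AddCommMonoid N]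
    [Module R N] (ψ : M →ₗ[R] A) (φ : N →ₗ[R] A)
    (hφ : ∀ n, Δ (φ n) = φ n ⊗ₜ 1 + 1 ⊗ₜ φ n) {r : A ⊗[R] A}
    (hr : r ∈ LinearMap.range (TensorProduct.map ψ φ)) :
    Algebra.TensorProduct.map (AlgHom.id R A) Δ r = leg12 r + leg13 r := by
  obtain ⟨t, rfl⟩ := hr
  induction t using TensorProduct.induction_on with
  | zero => simp
  | tmul m n => simp [hφ, TensorProduct.tmul_add]
  | add t t' ht ht' => simp only [map_add, ht, ht']; abel

lemma assoc_map_comul_id_of_mem_range {M N : Type*} [AddCommMonoid M] [Module R M]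
    [AddCommMonoid N] [Module R N] (φ : M →ₗ[R] A) (ψ : N →ₗ[R] A)
    (hφ : ∀ m, Δ (φ m) = φ m ⊗ₜ 1 + 1 ⊗ₜ φ m) {r : A ⊗[R] A}
    (hr : r ∈ LinearMap.range (TensorProduct.map φ ψ)) :
    Algebra.TensorProduct.assoc R R R A A A (Algebra.TensorProduct.map Δ (AlgHom.id R A) r) =
      leg13 r + leg23 r := by
  obtain ⟨t, rfl⟩ := hr
  induction t using TensorProduct.induction_on with
  | zero => simp
  | tmul m n => simp [hφ, TensorProduct.add_tmul]
  | add t t' ht ht' => simp only [map_add, ht, ht']; abel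

end TensorCube

section

attribute [local instance 100] LieRing.ofAssociativeRing

lemma comm_comp_eq_self_of_ιU_primitive {K L : Type*} [Field K] [LieRing L] [LieAlgebra K L]
    (Δ : UniversalEnvelopingAlgebra K L →ₐ[K]
      UniversalEnvelopingAlgebra K L ⊗[K] UniversalEnvelopingAlgebra K L)
    (hΔ : ∀ x : L, Δ (ιU K L x) = ιU K L x ⊗ₜ[K] 1 + 1 ⊗ₜ[K] ιU K L x) :
    (Algebra.TensorProduct.comm K _ _).toAlgHom.comp Δ = Δ := by
  refine UniversalEnvelopingAlgebra.hom_ext (h := LieHom.ext fun x => ?_)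
  show Algebra.TensorProduct.comm K _ _ (Δ (ιU K L x)) = Δ (ιU K L x)
  simp [hΔ, add_comm]

end

/-- If the degree-2 part of the 2-cocycle equation for a formal twist
`1 + r·h + f₂·h² + ⋯` holds for a skew-symmetric `r` in the image of `g ⊗ g`, then `r`
satisfies the classical Yang–Baxter equation. -/
theorem degree_two_gives_CYBE
    (Δ : Ug →ₐ[k] Ug ⊗[k] Ug)
    (hΔ : ∀ x : g, Δ (ιU k g x) = ιU k g x ⊗ₜ[k] 1 + 1 ⊗ₜ[k] ιU k g x)
    (r : Ug ⊗[k] Ug)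
    (hr : r ∈ LinearMap.range (ιι k g)) (hra : τU k g r = -r)
    (f₂ : Ug ⊗[k] Ug)
    (hdeg2 :
      ((1 : Ug) ⊗ₜ[k] r) * Algebra.TensorProduct.map (AlgHom.id k Ug) Δ r -
          αU k g ((r ⊗ₜ[k] (1 : Ug)) * Algebra.TensorProduct.map Δ (AlgHom.id k Ug) r) =
        (1 : Ug) ⊗ₜ[k] f₂ -
          αU k g (Algebra.TensorProduct.map Δ (AlgHom.id k Ug) f₂) +
          Algebra.TensorProduct.map (AlgHom.id k Ug) Δ f₂ -
          αU k g (f₂ ⊗ₜ[k] (1 : Ug))) :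
    (u23 k g r * u13 k g r - u13 k g r * u23 k g r) +
        (u23 k g r * u12 k g r - u12 k g r * u23 k g r) +
        (u13 k g r * u12 k g r - u12 k g r * u13 k g r) = 0 := by
  have hquad : leg23 r * (leg12 r + leg13 r) - leg12 r * (leg13 r + leg23 r) =
      leg23 f₂ - Algebra.TensorProduct.assoc k k k Ug Ug Ug
          (Algebra.TensorProduct.map Δ (AlgHom.id k Ug) f₂) +
        Algebra.TensorProduct.map (AlgHom.id k Ug) Δ f₂ - leg12 f₂ := by
    rw [← map_id_comul_of_mem_range (ιU k g) (ιU k g) hΔ hr,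
      ← assoc_map_comul_id_of_mem_range (ιU k g) (ιU k g) hΔ hr]
    rwa [map_mul] at hdeg2
  have h4 : 4 • ((leg23 r * leg13 r - leg13 r * leg23 r) +
      (leg23 r * leg12 r - leg12 r * leg23 r) + (leg13 r * leg12 r - leg12 r * leg13 r)) = 0 := by
    rw [← alt3_legs_eq_four_smul_yangBaxter hra, hquad,
      alt3_coboundary (comm_comp_eq_self_of_ιU_primitive Δ hΔ)]
  rw [← Nat.cast_smul_eq_nsmul k] at h4
  exact (smul_eq_zero.1 h4).resolve_left (by norm_num)
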